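/- arXiv:0910.1173 — 2 statements merged into one kernel-verified Lean document; each statement's English description precedes it below -/
import Mathlib

section
/- Let n ≥ 1 and let a₁, …, a_n be real numbers, with a₀ = 0, such that the points (0,a₀), (1,a₁), …, (n,a_n) are not all collinear. Let Γ(a₁,…,a_n) ⊆ ℝ² be the union of the segments joining (i−1, a_{i−1}) to (i, a_i) for i = 1,…,n, with length ℓ = Σ_{i=1}^{n} √(1 + (a_i − a_{i−1})²), and let δ be the one-dimensional Hausdorff measure of the frontier of the convex hull of Γ(a₁,…,a_n). Then the inconstancy ℐ(Γ(a₁,…,a_n)) := 2ℓ/δ satisfies 1 ≤ ℐ(Γ(a₁,…,a_n)) ≤ n. -/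
noncomputable section
open MeasureTheory Real Set Filter
open scoped ENNReal

/-- The point `(x, y)` of the Euclidean plane. -/
def pt (x y : ℝ) : EuclideanSpace ℝ (Fin 2) := !₂[x, y]

/-- The polygonal curve `Γ_N` through `(0,u₀), (1,u₁), …, (N,u_N)`: the union of the
segments joining `(i, u_i)` to `(i+1, u_{i+1})` for `i = 0, …, N−1`. -/
def polyCurve (u : ℕ → ℝ) (N : ℕ) : Set (EuclideanSpace ℝ (Fin 2)) :=
  ⋃ i ∈ Finset.range N, segment ℝ (pt i (u i)) (pt (i + 1) (u (i + 1)))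

/-- The length `ℓ(Γ_N) = Σ_{i<N} √(1 + (u_{i+1} − u_i)²)` of the polygonal curve. -/
def polyLength (u : ℕ → ℝ) (N : ℕ) : ℝ :=
  ∑ i ∈ Finset.range N, Real.sqrt (1 + (u (i + 1) - u i) ^ 2)

/-- The perimeter `δ(Γ_N)` of the convex hull of the polygonal curve: the
one-dimensional Hausdorff measure of the frontier of the convex hull. -/
def polyDelta (u : ℕ → ℝ) (N : ℕ) : ℝ :=
  (μH[1] (frontier (convexHull ℝ (polyCurve u N)))).toReal

/-- The inconstancy `ℐ(Γ_N) := 2 ℓ(Γ_N) / δ(Γ_N)` of the polygonal curve. -/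
def polyIncon (u : ℕ → ℝ) (N : ℕ) : ℝ :=
  2 * polyLength u N / polyDelta u N

/-!
Let `K` be the convex hull of the points `Pᵢ = (i, aᵢ)`; it is also the convex hull of `Γ`.
Over `x = i` the vertical fibre of `K` is an interval `[lowerᵢ, upperᵢ]`, and the polygonal curves
through the points `(i, lowerᵢ)` and through the points `(i, upperᵢ)` both run from `P₀` to `Pₙ`
and together make up the frontier of `K`. As the `Pᵢ` are not collinear the two curves meet only
in vertices, so `δ = ℓ(lower) + ℓ(upper)`.

For `δ ≤ 2ℓ`: the lower boundary is convex and can bend only at a vertex where it touches `Γ`, so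
between two consecutive contacts it is a chord of `Γ`; hence `ℓ(lower) ≤ ℓ`, and likewise
`ℓ(upper) ≤ ℓ`.

For `2ℓ ≤ nδ`: the two boundaries form a closed curve of length `δ` that passes through the ends of
the vertical segments containing `Pᵢ` and `Pᵢ₊₁`, so, the distance being convex, every edge
`PᵢPᵢ₊₁` of `Γ` has length at most `δ / 2`.
-/

namespace Inconstancy

open fwdDiff Topology

local notation "ℝ²" => EuclideanSpace ℝ (Fin 2)

section General

lemma isCompact_segment {E : Type*} [AddCommGroup E] [Module ℝ E] [TopologicalSpace E]
    [IsTopologicalAddGroup E] [ContinuousSMul ℝ E] (x y : E) : IsCompact (segment ℝ x y) := by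
  rw [← convexHull_pair]
  exact (toFinite _).isCompact_convexHull ℝ

lemma eq_of_mem_convexHull_of_forall_lt {E : Type*} [AddCommGroup E] [Module ℝ E] {s : Set E}
    {p w : E} (φ : E →ₗ[ℝ] ℝ) (hs : ∀ q ∈ s, q ≠ p → φ p < φ q) (hw : w ∈ convexHull ℝ s)
    (hφw : φ w ≤ φ p) : w = p := by
  replace hw := convexHull_mono (subset_insert_sdiff_singleton p s) hw
  rcases (s \ {p}).eq_empty_or_nonempty with he | hne
  · rwa [he, insert_empty_eq, convexHull_singleton] at hw
  rw [convexHull_insert hne, mem_convexJoin] at hw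
  obtain ⟨_, hp, q, hq, hwq⟩ := hw
  rw [mem_singleton_iff.1 hp] at hwq
  have hpq : φ p < φ q :=
    convexHull_min (fun q hq => hs q hq.1 hq.2) (convex_halfSpace_gt φ.isLinear _) hq
  obtain ⟨θ, ⟨hθ₀, -⟩, rfl⟩ := segment_eq_image' ℝ p q ▸ hwq
  have hθ : θ = 0 := by
    simp only [map_add, map_smul, map_sub, smul_eq_mul] at hφw
    nlinarith
  simp [hθ]

lemma mem_frontier_of_forall_add_smul_notMem {E : Type*} [AddCommGroup E] [Module ℝ E]
    [TopologicalSpace E] [ContinuousAdd E] [ContinuousSMul ℝ E] {s : Set E} {z v : E}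
    (hz : z ∈ s) (hv : ∀ ε > (0 : ℝ), z + ε • v ∉ s) : z ∈ frontier s := by
  refine ⟨subset_closure hz, fun hint => ?_⟩
  have hlim : Tendsto (fun ε : ℝ => z + ε • v) (𝓝[>] 0) (𝓝 z) := by
    have hc : Continuous fun ε : ℝ => z + ε • v := by fun_prop
    simpa using (hc.tendsto 0).mono_left nhdsWithin_le_nhds
  obtain ⟨ε, hεs, hε⟩ :=
    ((hlim.eventually (mem_interior_iff_mem_nhds.1 hint)).and self_mem_nhdsWithin).exists
  exact hv ε hε hεs

lemma dist_le_of_mem_segment {E : Type*} [NormedAddCommGroup E] [NormedSpace ℝ E]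
    {x y u u' v v' : E} {D : ℝ} (hx : x ∈ segment ℝ u u') (hy : y ∈ segment ℝ v v')
    (h : ∀ p ∈ ({u, u'} : Set E), ∀ q ∈ ({v, v'} : Set E), dist p q ≤ D) : dist x y ≤ D := by
  have key : ∀ p ∈ ({u, u'} : Set E), dist p y ≤ D := by
    intro p hp
    rw [dist_comm]
    refine ((convexOn_univ_dist p).le_on_segment (mem_univ _) (mem_univ _) hy).trans
      (max_le ?_ ?_) <;> rw [dist_comm] <;> exact h p hp _ (by simp)
  exact ((convexOn_univ_dist y).le_on_segment (mem_univ _) (mem_univ _) hx).trans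
    (max_le (key u (by simp)) (key u' (by simp)))

lemma exists_mem_Icc_of_mem_Icc {N : ℕ} (hN : 1 ≤ N) {x : ℝ} (hx : x ∈ Icc (0 : ℝ) N) :
    ∃ k < N, x ∈ Icc (k : ℝ) (k + 1) := by
  rcases lt_or_ge ⌊x⌋₊ N with hk | hk
  · exact ⟨⌊x⌋₊, hk, Nat.floor_le hx.1, (Nat.lt_floor_add_one x).le⟩
  · refine ⟨N - 1, by omega, ?_, ?_⟩ <;> push_cast [hN]
    · linarith [hx.2, (Nat.cast_le.2 hk).trans (Nat.floor_le hx.1)]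
    · linarith [hx.2]

end General

section ClosedChain

variable {X : Type*} [PseudoMetricSpace X] (c c' : ℕ → X) {N : ℕ}

lemma two_mul_dist_same_chain_le (h₀ : c 0 = c' 0) (hN : c N = c' N) {i j : ℕ} (hij : i ≤ j)
    (hj : j ≤ N) :
    2 * dist (c i) (c j) ≤ ∑ k ∈ Finset.range N, dist (c k) (c (k + 1)) +
      ∑ k ∈ Finset.range N, dist (c' k) (c' (k + 1)) := by
  have e₁ := Finset.sum_range_add_sum_Ico (fun k => dist (c k) (c (k + 1))) (hij.trans hj)
  have e₂ := Finset.sum_Ico_consecutive (fun k => dist (c k) (c (k + 1))) hij hj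
  have h₁ := dist_le_range_sum_dist c i
  have h₂ := dist_le_Ico_sum_dist c hij
  have h₃ := dist_le_Ico_sum_dist c hj
  have h₄ := dist_le_range_sum_dist c' N
  have t : dist (c i) (c j) ≤ dist (c 0) (c i) + dist (c' 0) (c' N) + dist (c j) (c N) := by
    rw [← h₀, ← hN, dist_comm (c 0), dist_comm (c j)]
    exact dist_triangle4 _ _ _ _
  linarith

lemma two_mul_dist_cross_chain_le (h₀ : c 0 = c' 0) (hN : c N = c' N) {i j : ℕ} (hi : i ≤ N)
    (hj : j ≤ N) :
    2 * dist (c i) (c' j) ≤ ∑ k ∈ Finset.range N, dist (c k) (c (k + 1)) +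
      ∑ k ∈ Finset.range N, dist (c' k) (c' (k + 1)) := by
  have e₁ := Finset.sum_range_add_sum_Ico (fun k => dist (c k) (c (k + 1))) hi
  have e₂ := Finset.sum_range_add_sum_Ico (fun k => dist (c' k) (c' (k + 1))) hj
  have h₁ := dist_le_range_sum_dist c i
  have h₂ := dist_le_range_sum_dist c' j
  have h₃ := dist_le_Ico_sum_dist c hi
  have h₄ := dist_le_Ico_sum_dist c' hj
  have t₀ : dist (c i) (c' j) ≤ dist (c 0) (c i) + dist (c' 0) (c' j) := by
    rw [← h₀, dist_comm (c 0)]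
    exact dist_triangle _ _ _
  have tN : dist (c i) (c' j) ≤ dist (c i) (c N) + dist (c' j) (c' N) := by
    rw [hN, dist_comm (c' j)]
    exact dist_triangle _ _ _
  linarith

end ClosedChain

section Plane

@[simp] lemma pt_apply_zero (x y : ℝ) : pt x y 0 = x := rfl

@[simp] lemma pt_apply_one (x y : ℝ) : pt x y 1 = y := rfl

lemma pt_eta (w : ℝ²) : pt (w 0) (w 1) = w := by
  ext i; fin_cases i <;> rfl

lemma dist_pt (x y x' y' : ℝ) :
    dist (pt x y) (pt x' y') = √((x - x') ^ 2 + (y - y') ^ 2) := by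
  simp [EuclideanSpace.dist_eq, Fin.sum_univ_two, Real.dist_eq, sq_abs]

lemma lineMap_pt (x y x' y' t : ℝ) :
    AffineMap.lineMap (pt x y) (pt x' y') t = pt (x + t * (x' - x)) (y + t * (y' - y)) := by
  rw [AffineMap.lineMap_apply]
  ext i; fin_cases i <;> simp [pt] <;> ring

lemma pt_mem_segment {x y y₁ y₂ : ℝ} (h₁ : y₁ ≤ y) (h₂ : y ≤ y₂) :
    pt x y ∈ segment ℝ (pt x y₁) (pt x y₂) := by
  have hf : ∀ t, AffineMap.lineMap (pt x 0) (pt x 1) t = pt x t := fun t => by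
    simp [lineMap_pt]
  have hy : y ∈ segment ℝ y₁ y₂ := by
    rw [segment_eq_Icc (h₁.trans h₂)]
    exact ⟨h₁, h₂⟩
  have := mem_image_of_mem (AffineMap.lineMap (pt x 0) (pt x 1) : ℝ → ℝ²) hy
  rwa [image_segment, hf, hf, hf] at this

lemma isLinearMap_coords (u v : ℝ) : IsLinearMap ℝ fun w : ℝ² => u * w 0 + v * w 1 :=
  ⟨fun _ _ => by simp; ring, fun _ _ => by simp; ring⟩

end Plane

def vertex (h : ℕ → ℝ) (i : ℕ) : ℝ² := pt i (h i)

def chord (h : ℕ → ℝ) (j : ℕ) (x : ℝ) : ℝ := h j + Δ_[1] h j * (x - j)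

section PolygonalCurve

variable (h : ℕ → ℝ)

lemma chord_self (j : ℕ) : chord h j j = h j := by simp [chord]

lemma chord_succ (j : ℕ) : chord h j (j + 1) = h (j + 1) := by simp [chord, fwdDiff]

lemma chord_neg (j : ℕ) (x : ℝ) : chord (-h) j x = -chord h j x := by
  simp only [chord, fwdDiff, Pi.neg_apply]
  ring

lemma polyCurve_eq_biUnion (N : ℕ) :
    polyCurve h N = ⋃ i ∈ Finset.range N, segment ℝ (vertex h i) (vertex h (i + 1)) := by
  simp [polyCurve, vertex]

lemma dist_vertex_succ (i : ℕ) :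
    dist (vertex h i) (vertex h (i + 1)) = √(1 + Δ_[1] h i ^ 2) := by
  rw [vertex, vertex, dist_pt, fwdDiff]
  push_cast
  ring_nf

lemma polyLength_eq_sum_dist (N : ℕ) :
    polyLength h N = ∑ i ∈ Finset.range N, dist (vertex h i) (vertex h (i + 1)) := by
  simp only [dist_vertex_succ]
  rfl

lemma polyLength_nonneg (N : ℕ) : 0 ≤ polyLength h N :=
  Finset.sum_nonneg fun _ _ => Real.sqrt_nonneg _

lemma polyLength_neg (N : ℕ) : polyLength (-h) N = polyLength h N := by
  refine Finset.sum_congr rfl fun i _ => ?_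
  rw [Pi.neg_apply, Pi.neg_apply, neg_sub_neg, ← neg_sub, neg_sq]

lemma segment_vertex_eq_image (j : ℕ) :
    segment ℝ (vertex h j) (vertex h (j + 1)) =
      (fun x => pt x (chord h j x)) '' Icc (j : ℝ) (j + 1) := by
  have hI : Icc (0 : ℝ) 1 = (· - (j : ℝ)) '' Icc (j : ℝ) (j + 1) := by
    rw [image_sub_const_Icc, sub_self, add_sub_cancel_left]
  rw [segment_eq_image_lineMap, hI, image_image]
  congr 1
  funext x
  simp only [vertex, lineMap_pt, chord, fwdDiff]
  push_cast
  ring_nf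

variable {h} in
lemma mem_polyCurve {N : ℕ} {z : ℝ²} :
    z ∈ polyCurve h N ↔ ∃ k < N, ∃ x ∈ Icc (k : ℝ) (k + 1), pt x (chord h k x) = z := by
  simp [polyCurve_eq_biUnion, segment_vertex_eq_image]

variable {h} in
lemma polyCurve_subset {N : ℕ} {s : Set ℝ²} (hs : Convex ℝ s) (hv : ∀ i ≤ N, vertex h i ∈ s) :
    polyCurve h N ⊆ s := by
  rw [polyCurve_eq_biUnion]
  exact iUnion₂_subset fun i hi =>
    hs.segment_subset (hv i (by simp at hi; omega)) (hv (i + 1) (by simpa using hi))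

lemma measurableSet_polyCurve (N : ℕ) : MeasurableSet (polyCurve h N) := by
  rw [polyCurve_eq_biUnion]
  exact Finset.measurableSet_biUnion _ fun _ _ => (isCompact_segment _ _).isClosed.measurableSet

lemma segment_vertex_inter_subset {i j : ℕ} (hij : i < j) :
    segment ℝ (vertex h i) (vertex h (i + 1)) ∩ segment ℝ (vertex h j) (vertex h (j + 1)) ⊆
      {vertex h j} := by
  rw [segment_vertex_eq_image, segment_vertex_eq_image]
  rintro _ ⟨⟨x, ⟨-, hx⟩, rfl⟩, ⟨x', ⟨hx', -⟩, hxx'⟩⟩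
  have hj : (i : ℝ) + 1 ≤ j := by exact_mod_cast hij
  obtain rfl : x' = x := by simpa using congrArg (· 0) hxx'
  obtain rfl : x' = j := by linarith
  rw [mem_singleton_iff, ← hxx']
  exact congrArg _ (chord_self h j)

lemma hausdorffMeasure_polyCurve (N : ℕ) :
    μH[1] (polyCurve h N) = ENNReal.ofReal (polyLength h N) := by
  have := Measure.nullSingletonClass_hausdorff ℝ² one_pos
  have hnull {i j : ℕ} (hij : i < j) :=
    measure_mono_null (segment_vertex_inter_subset h hij) (measure_singleton (μ := μH[1]) _)
  rw [polyCurve_eq_biUnion, measure_biUnion_finset₀, polyLength_eq_sum_dist,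
    ENNReal.ofReal_sum_of_nonneg fun _ _ => dist_nonneg]
  · simp [hausdorffMeasure_segment, edist_dist]
  · intro i _ j _ hij
    rcases hij.lt_or_gt with hlt | hlt
    · exact hnull hlt
    · exact AEDisjoint.symm (hnull hlt)
  · exact fun _ _ => (isCompact_segment _ _).isClosed.measurableSet.nullMeasurableSet

end PolygonalCurve

section DiscreteConvexity

variable {c : ℕ → ℝ}

lemma sum_Ico_fwdDiff {j k : ℕ} (hjk : j ≤ k) : ∑ i ∈ Finset.Ico j k, Δ_[1] c i = c k - c j :=
  Finset.sum_Ico_sub c hjk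

lemma chord_le_of_monotoneOn {m : ℕ} (hc : MonotoneOn (Δ_[1] c) (Iio m)) {j k : ℕ} (hj : j < m)
    (hk : k ≤ m) : chord c j k ≤ c k := by
  rw [chord]
  rcases le_total j k with hjk | hkj
  · have hsum := Finset.card_nsmul_le_sum (Finset.Ico j k) (Δ_[1] c) (Δ_[1] c j) fun i hi =>
      hc hj (mem_Iio.2 (by simp at hi; omega)) (Finset.mem_Ico.1 hi).1
    rw [sum_Ico_fwdDiff hjk, Nat.card_Ico, nsmul_eq_mul, Nat.cast_sub hjk] at hsum
    linarith
  · have hsum := Finset.sum_le_card_nsmul (Finset.Ico k j) (Δ_[1] c) (Δ_[1] c j) fun i hi =>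
      hc (mem_Iio.2 (by simp at hi; omega)) hj (Finset.mem_Ico.1 hi).2.le
    rw [sum_Ico_fwdDiff hkj, Nat.card_Ico, nsmul_eq_mul, Nat.cast_sub hkj] at hsum
    linarith

lemma sum_Ico_dist_vertex_of_fwdDiff_eq {j k : ℕ} (hjk : j ≤ k)
    (hc : ∀ i ∈ Finset.Ico j k, Δ_[1] c i = Δ_[1] c j) :
    ∑ i ∈ Finset.Ico j k, dist (vertex c i) (vertex c (i + 1)) =
      dist (vertex c j) (vertex c k) := by
  have hrise : c k - c j = (k - j) * Δ_[1] c j := by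
    rw [← sum_Ico_fwdDiff hjk, Finset.sum_congr rfl hc]
    simp [Nat.cast_sub hjk]
  have hkj : (0 : ℝ) ≤ k - j := sub_nonneg.2 (Nat.cast_le.2 hjk)
  rw [Finset.sum_congr rfl fun i hi => by rw [dist_vertex_succ, hc i hi], Finset.sum_const,
    Nat.card_Ico, nsmul_eq_mul, Nat.cast_sub hjk, vertex, vertex, dist_pt,
    show ((j : ℝ) - k) ^ 2 + (c j - c k) ^ 2 = (k - j) ^ 2 * (1 + Δ_[1] c j ^ 2) by
      rw [← neg_sub (c k), hrise]; ring,
    Real.sqrt_mul (sq_nonneg _), Real.sqrt_sq hkj]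

theorem polyLength_le_of_fwdDiff_eq_of_ne {b : ℕ → ℝ} {m : ℕ} (h₀ : c 0 = b 0) (hm : c m = b m)
    (hc : ∀ i, i + 1 < m → c (i + 1) ≠ b (i + 1) → Δ_[1] c (i + 1) = Δ_[1] c i) :
    polyLength c m ≤ polyLength b m := by
  let L (h : ℕ → ℝ) (k : ℕ) := ∑ i ∈ Finset.range k, dist (vertex h i) (vertex h (i + 1))
  have hrun : ∀ j k, j ≤ k → c j = b j → c k = b k →
      (∀ i ∈ Finset.Ico j k, Δ_[1] c i = Δ_[1] c j) → L c j ≤ L b j → L c k ≤ L b k := by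
    intro j k hjk hj hk hconst hL
    simp only [L, ← Finset.sum_range_add_sum_Ico _ hjk,
      sum_Ico_dist_vertex_of_fwdDiff_eq hjk hconst]
    have : dist (vertex c j) (vertex c k) = dist (vertex b j) (vertex b k) := by
      simp [vertex, hj, hk]
    linarith [dist_le_Ico_sum_dist (vertex b) hjk]
  have key : ∀ k ≤ m, ∃ j ≤ k, c j = b j ∧ (∀ i ∈ Finset.Ico j k, Δ_[1] c i = Δ_[1] c j) ∧
      L c j ≤ L b j := by
    intro k
    induction k with
    | zero => exact fun _ => ⟨0, le_rfl, h₀, by simp, le_rfl⟩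
    | succ k ih =>
      intro hk
      obtain ⟨j, hjk, hj, hconst, hL⟩ := ih (by omega)
      by_cases hck : c k = b k
      · exact ⟨k, by omega, hck, by simp, hrun j k hjk hj hck hconst hL⟩
      have hjk' : j < k := lt_of_le_of_ne hjk (by rintro rfl; exact hck hj)
      refine ⟨j, by omega, hj, fun i hi => ?_, hL⟩
      obtain ⟨hji, hik⟩ := Finset.mem_Ico.1 hi
      obtain hik | rfl := Nat.lt_succ_iff_lt_or_eq.1 hik
      · exact hconst i (Finset.mem_Ico.2 ⟨hji, hik⟩)
      obtain ⟨l, rfl⟩ : ∃ l, i = l + 1 := ⟨i - 1, by omega⟩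
      rw [hc l (by omega) hck]
      exact hconst l (Finset.mem_Ico.2 ⟨by omega, by omega⟩)
  obtain ⟨j, hjm, hj, hconst, hL⟩ := key m le_rfl
  simpa only [polyLength_eq_sum_dist] using hrun j m hjm hj hm hconst hL

end DiscreteConvexity

section Hull

variable (n : ℕ) (a : ℕ → ℝ)

def points : Set ℝ² := {p | ∃ i ≤ n, p = pt i (a i)}

def hull : Set ℝ² := convexHull ℝ (points n a)

lemma isCompact_hull : IsCompact (hull n a) := by
  have : points n a = vertex a '' Iic n := by ext; simp [points, vertex, eq_comm]
  rw [hull, this]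
  exact ((finite_Iic n).image _).isCompact_convexHull ℝ

variable {n a}

lemma convex_hull : Convex ℝ (hull n a) := convex_convexHull ℝ _

lemma vertex_mem_points {i : ℕ} (hi : i ≤ n) : vertex a i ∈ points n a := ⟨i, hi, rfl⟩

lemma vertex_mem_hull {i : ℕ} (hi : i ≤ n) : vertex a i ∈ hull n a :=
  subset_convexHull ℝ _ (vertex_mem_points hi)

lemma convexHull_polyCurve (hn : 1 ≤ n) : convexHull ℝ (polyCurve a n) = hull n a := by
  refine subset_antisymm (convexHull_min (polyCurve_subset convex_hull fun _ => vertex_mem_hull)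
    convex_hull) (convexHull_mono ?_)
  rintro _ ⟨i, hi, rfl⟩
  rw [polyCurve_eq_biUnion, mem_iUnion₂]
  rcases hi.lt_or_eq with hi | rfl
  · exact ⟨i, Finset.mem_range.2 hi, left_mem_segment ℝ _ _⟩
  · obtain ⟨k, rfl⟩ : ∃ k, i = k + 1 := ⟨i - 1, by omega⟩
    exact ⟨k, by simp, right_mem_segment ℝ _ _⟩

lemma le_of_mem_hull {u v t : ℝ} (h : ∀ j ≤ n, t ≤ u * j + v * a j) {w : ℝ²}
    (hw : w ∈ hull n a) : t ≤ u * w 0 + v * w 1 :=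
  convexHull_min (by rintro _ ⟨j, hj, rfl⟩; exact h j hj)
    (convex_halfSpace_ge (isLinearMap_coords u v) t) hw

lemma lt_of_mem_hull {u v t : ℝ} (h : ∀ j ≤ n, t < u * j + v * a j) {w : ℝ²}
    (hw : w ∈ hull n a) : t < u * w 0 + v * w 1 :=
  convexHull_min (by rintro _ ⟨j, hj, rfl⟩; exact h j hj)
    (convex_halfSpace_gt (isLinearMap_coords u v) t) hw

lemma apply_zero_mem_Icc_of_mem_hull {w : ℝ²} (hw : w ∈ hull n a) : w 0 ∈ Icc (0 : ℝ) n := by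
  have h₀ := le_of_mem_hull (u := 1) (v := 0) (t := 0) (fun j _ => by simp) hw
  have hn := le_of_mem_hull (u := -1) (v := 0) (t := -n) (fun j hj => by simpa using hj) hw
  constructor <;> linarith

lemma eq_of_pt_zero_mem_hull {y : ℝ} (hy : pt 0 y ∈ hull n a) : y = a 0 := by
  have := eq_of_mem_convexHull_of_forall_lt (EuclideanSpace.proj (0 : Fin 2) : ℝ² →L[ℝ] ℝ)
    (p := vertex a 0) ?_ hy (by simp [vertex])
  · simpa [vertex] using congrArg (· 1) this
  rintro _ ⟨j, -, rfl⟩ hj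
  have : j ≠ 0 := by rintro rfl; exact hj rfl
  simp [vertex]
  positivity

lemma eq_of_pt_last_mem_hull {y : ℝ} (hy : pt n y ∈ hull n a) : y = a n := by
  have := eq_of_mem_convexHull_of_forall_lt (-(EuclideanSpace.proj (0 : Fin 2) : ℝ² →L[ℝ] ℝ))
    (p := vertex a n) ?_ hy (by simp [vertex])
  · simpa [vertex] using congrArg (· 1) this
  rintro _ ⟨j, hjn, rfl⟩ hj
  have : j < n := lt_of_le_of_ne hjn (by rintro rfl; exact hj rfl)
  simp [vertex]
  exact_mod_cast this

end Hull

section LowerBoundary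

variable (n : ℕ) (a : ℕ → ℝ)

def lower (i : ℕ) : ℝ := sInf {y | pt i y ∈ hull n a}

variable {n a}

lemma bddBelow_fiber (x : ℝ) : BddBelow {y | pt x y ∈ hull n a} := by
  refine BddBelow.mono ?_
    ((isCompact_hull n a).image (f := fun w : ℝ² => w 1) (by fun_prop)).bddBelow
  exact fun y hy => ⟨pt x y, hy, rfl⟩

lemma lower_le_of_pt_mem_hull {i : ℕ} {y : ℝ} (hy : pt i y ∈ hull n a) : lower n a i ≤ y :=
  csInf_le (bddBelow_fiber _) hy

lemma pt_lower_mem_hull {i : ℕ} (hi : i ≤ n) : pt i (lower n a i) ∈ hull n a :=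
  IsClosed.csInf_mem ((isCompact_hull n a).isClosed.preimage (by unfold pt; fun_prop))
    ⟨a i, vertex_mem_hull hi⟩ (bddBelow_fiber _)

lemma lower_le {i : ℕ} (hi : i ≤ n) : lower n a i ≤ a i :=
  lower_le_of_pt_mem_hull (vertex_mem_hull hi)

lemma lower_zero : lower n a 0 = a 0 :=
  eq_of_pt_zero_mem_hull (by simpa using pt_lower_mem_hull (a := a) (Nat.zero_le n))

lemma lower_last : lower n a n = a n :=
  eq_of_pt_last_mem_hull (pt_lower_mem_hull le_rfl)

variable (n a) in
lemma monotoneOn_fwdDiff_lower : MonotoneOn (Δ_[1] (lower n a)) (Iio n) := by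
  refine monotoneOn_of_le_add_one ordConnected_Iio fun i _ _ hi => ?_
  rw [mem_Iio] at hi
  have hmid := convex_hull.lineMap_mem (pt_lower_mem_hull (n := n) (a := a) (i := i) (by omega))
    (pt_lower_mem_hull (i := i + 2) (by omega)) (t := 1 / 2) ⟨by norm_num, by norm_num⟩
  rw [lineMap_pt] at hmid
  have := lower_le_of_pt_mem_hull (i := i + 1) (by convert hmid using 2; push_cast; ring)
  simp only [fwdDiff]
  linarith

lemma chord_lower_le {j : ℕ} (hj : j < n) {w : ℝ²} (hw : w ∈ hull n a) :
    chord (lower n a) j (w 0) ≤ w 1 := by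
  have := le_of_mem_hull (u := -Δ_[1] (lower n a) j) (v := 1)
    (t := lower n a j - Δ_[1] (lower n a) j * j) (fun k hk => ?_) hw
  · rw [chord]
    linarith
  have := chord_le_of_monotoneOn (monotoneOn_fwdDiff_lower n a) hj hk
  rw [chord] at this
  linarith [lower_le (a := a) hk]

lemma fwdDiff_lower_succ {i : ℕ} (hi : i + 1 < n) (hne : lower n a (i + 1) ≠ a (i + 1)) :
    Δ_[1] (lower n a) (i + 1) = Δ_[1] (lower n a) i := by
  set s₁ := Δ_[1] (lower n a) i
  set s₂ := Δ_[1] (lower n a) (i + 1)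
  have hle : s₁ ≤ s₂ :=
    monotoneOn_fwdDiff_lower n a (by simp; omega) (by simpa using hi) (by omega)
  by_contra hne'
  have hlt : s₁ < s₂ := lt_of_le_of_ne hle (Ne.symm hne')
  set y := lower n a (i + 1)
  -- The line through `(i + 1, y)` of slope `(s₁ + s₂) / 2` passes strictly below every point,
  -- yet through a point of the hull.
  have := lt_of_mem_hull (u := -(s₁ + s₂) / 2) (v := 1) (t := y - (s₁ + s₂) / 2 * (i + 1))
    (fun k hk => ?_) (pt_lower_mem_hull (a := a) hi.le)
  · simp at this
    linarith
  rcases lt_trichotomy k (i + 1) with hk' | rfl | hk'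
  · have h₁ := chord_le_of_monotoneOn (monotoneOn_fwdDiff_lower n a) (by omega : i < n) hk
    have hk'' : (k : ℝ) + 1 ≤ i + 1 := by exact_mod_cast hk'
    simp only [chord] at h₁
    have : y = lower n a i + s₁ := by simp [y, s₁, fwdDiff]
    nlinarith [lower_le (a := a) hk]
  · have := lt_of_le_of_ne (lower_le (a := a) hk) hne
    push_cast
    linarith
  · have h₂ := chord_le_of_monotoneOn (monotoneOn_fwdDiff_lower n a) hi hk
    have hk'' : (i : ℝ) + 1 + 1 ≤ k := by exact_mod_cast hk'
    simp only [chord] at h₂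
    push_cast at h₂
    nlinarith [lower_le (a := a) hk]

lemma polyLength_lower_le : polyLength (lower n a) n ≤ polyLength a n :=
  polyLength_le_of_fwdDiff_eq_of_ne lower_zero lower_last fun _ hi hne => fwdDiff_lower_succ hi hne

end LowerBoundary

section UpperBoundary

variable (n : ℕ) (a : ℕ → ℝ)

-- Reflection in the horizontal axis exchanges the two boundaries of the hull (`pt_mem_hull_neg`),
-- so every property of `upper` is read off from the corresponding one of `lower`.
def upper : ℕ → ℝ := -lower n (-a)

variable {n a}

lemma pt_mem_hull_neg {x y : ℝ} : pt x y ∈ hull n (-a) ↔ pt x (-y) ∈ hull n a := by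
  let R : ℝ² → ℝ² := fun w => pt (w 0) (-w 1)
  have hR : IsLinearMap ℝ R := ⟨fun v w => by ext i; fin_cases i <;> simp [R, pt]; ring,
    fun c w => by ext i; fin_cases i <;> simp [R, pt]⟩
  have hRR : ∀ w, R (R w) = w := fun w => by simp [R, pt_eta]
  have himage : R '' points n a = points n (-a) := by
    ext p
    simp only [points, mem_image]
    constructor
    · rintro ⟨_, ⟨i, hi, rfl⟩, rfl⟩
      exact ⟨i, hi, by simp [R]⟩
    · rintro ⟨i, hi, rfl⟩
      exact ⟨_, ⟨i, hi, rfl⟩, by simp [R]⟩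
  rw [hull, ← himage, ← hR.image_convexHull]
  constructor
  · rintro ⟨w, hw, hRw⟩
    rwa [← hRR w, hRw] at hw
  · exact fun h => ⟨_, h, by simp [R]⟩

lemma pt_upper_mem_hull {i : ℕ} (hi : i ≤ n) : pt i (upper n a i) ∈ hull n a :=
  pt_mem_hull_neg.1 (pt_lower_mem_hull hi)

lemma le_upper {i : ℕ} (hi : i ≤ n) : a i ≤ upper n a i := by
  simpa [upper, le_neg] using lower_le (a := -a) hi

lemma upper_zero : upper n a 0 = a 0 := by simp [upper, lower_zero]

lemma upper_last : upper n a n = a n := by simp [upper, lower_last]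

lemma le_chord_upper {j : ℕ} (hj : j < n) {w : ℝ²} (hw : w ∈ hull n a) :
    w 1 ≤ chord (upper n a) j (w 0) := by
  have := chord_lower_le hj (pt_mem_hull_neg.2 (by rwa [neg_neg, pt_eta]) : pt (w 0) (-w 1) ∈ _)
  simp only [upper, chord_neg, pt_apply_zero, pt_apply_one] at this ⊢
  linarith

lemma polyLength_upper_le : polyLength (upper n a) n ≤ polyLength a n := by
  simpa [upper, polyLength_neg] using polyLength_lower_le (n := n) (a := -a)

lemma lower_le_upper {i : ℕ} (hi : i ≤ n) : lower n a i ≤ upper n a i :=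
  (lower_le hi).trans (le_upper hi)

end UpperBoundary

section Frontier

variable {n : ℕ} {a : ℕ → ℝ}

lemma polyCurve_lower_subset_hull : polyCurve (lower n a) n ⊆ hull n a :=
  polyCurve_subset convex_hull fun _ => pt_lower_mem_hull

lemma polyCurve_upper_subset_hull : polyCurve (upper n a) n ⊆ hull n a :=
  polyCurve_subset convex_hull fun _ => pt_upper_mem_hull

lemma pt_mem_interior_hull (hn : 1 ≤ n) {x y : ℝ} (hx : x ∈ Ioo (0 : ℝ) n)
    (hy : ∀ j < n, chord (lower n a) j x < y ∧ y < chord (upper n a) j x) :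
    pt x y ∈ interior (hull n a) := by
  let U : Set ℝ² := {w | 0 < w 0} ∩ {w | w 0 < n} ∩ ⋂ j ∈ Finset.range n,
    {w | chord (lower n a) j (w 0) < w 1} ∩ {w | w 1 < chord (upper n a) j (w 0)}
  have hU : IsOpen U := by
    refine ((isOpen_lt (by fun_prop) (by fun_prop)).inter
      (isOpen_lt (by fun_prop) (by fun_prop))).inter (isOpen_biInter_finset fun j _ => ?_)
    exact (isOpen_lt (by unfold chord; fun_prop) (by fun_prop)).inter
      (isOpen_lt (by fun_prop) (by unfold chord; fun_prop))
  refine interior_maximal (fun w hw => ?_) hU ?_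
  · simp only [U, mem_inter_iff, mem_iInter, Finset.mem_range] at hw
    obtain ⟨⟨hw₀, hwn⟩, hwj⟩ := hw
    obtain ⟨k, hk, hwk⟩ := exists_mem_Icc_of_mem_Icc hn ⟨hw₀.le, hwn.le⟩
    rw [← pt_eta w]
    exact convex_hull.segment_subset
      (polyCurve_lower_subset_hull (mem_polyCurve.2 ⟨k, hk, _, hwk, rfl⟩))
      (polyCurve_upper_subset_hull (mem_polyCurve.2 ⟨k, hk, _, hwk, rfl⟩))
      (pt_mem_segment (hwj k hk).1.le (hwj k hk).2.le)
  · simp only [U, mem_inter_iff, mem_iInter, Finset.mem_range]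
    exact ⟨hx, hy⟩

lemma frontier_hull_subset (hn : 1 ≤ n) :
    frontier (hull n a) ⊆ polyCurve (lower n a) n ∪ polyCurve (upper n a) n := by
  intro z hz
  have hzK : z ∈ hull n a := (isCompact_hull n a).isClosed.frontier_subset hz
  obtain ⟨k, hk, hzk⟩ := exists_mem_Icc_of_mem_Icc hn (apply_zero_mem_Icc_of_mem_hull hzK)
  rcases (chord_lower_le hk hzK).eq_or_lt with hlo | hlo
  · exact Or.inl (mem_polyCurve.2 ⟨k, hk, _, hzk, by rw [hlo, pt_eta]⟩)
  rcases (le_chord_upper hk hzK).eq_or_lt with hup | hup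
  · exact Or.inr (mem_polyCurve.2 ⟨k, hk, _, hzk, by rw [← hup, pt_eta]⟩)
  refine absurd (pt_eta z ▸ pt_mem_interior_hull hn ⟨?_, ?_⟩ fun j hj => ⟨?_, ?_⟩)
    ((isCompact_hull n a).isClosed.frontier_eq ▸ hz).2
  · refine (apply_zero_mem_Icc_of_mem_hull hzK).1.lt_of_ne fun h₀ => ?_
    obtain rfl : k = 0 := by exact_mod_cast le_antisymm (h₀ ▸ hzk.1) k.cast_nonneg
    rw [← h₀] at hlo hup
    simp [chord, lower_zero, upper_zero] at hlo hup
    linarith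
  · refine (apply_zero_mem_Icc_of_mem_hull hzK).2.lt_of_ne fun hn' => ?_
    have hkn : k + 1 = n := by
      have : n ≤ k + 1 := by exact_mod_cast hn' ▸ hzk.2
      omega
    rw [hn', ← hkn, Nat.cast_succ, chord_succ, hkn, lower_last] at hlo
    rw [hn', ← hkn, Nat.cast_succ, chord_succ, hkn, upper_last] at hup
    linarith
  · exact (chord_lower_le hj (polyCurve_lower_subset_hull
      (mem_polyCurve.2 ⟨k, hk, _, hzk, rfl⟩))).trans_lt hlo
  · exact hup.trans_le (le_chord_upper hj (polyCurve_upper_subset_hull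
      (mem_polyCurve.2 ⟨k, hk, _, hzk, rfl⟩)))

theorem frontier_hull (hn : 1 ≤ n) :
    frontier (hull n a) = polyCurve (lower n a) n ∪ polyCurve (upper n a) n := by
  refine subset_antisymm (frontier_hull_subset hn) (union_subset (fun z hz => ?_) fun z hz => ?_)
  · obtain ⟨k, hk, x, -, rfl⟩ := mem_polyCurve.1 hz
    refine mem_frontier_of_forall_add_smul_notMem (v := pt 0 (-1))
      (polyCurve_lower_subset_hull hz) fun ε hε hmem => ?_
    have := chord_lower_le hk hmem
    simp at this
    linarith
  · obtain ⟨k, hk, x, -, rfl⟩ := mem_polyCurve.1 hz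
    refine mem_frontier_of_forall_add_smul_notMem (v := pt 0 1)
      (polyCurve_upper_subset_hull hz) fun ε hε hmem => ?_
    have := le_chord_upper hk hmem
    simp at this
    linarith

end Frontier

section Perimeter

variable {n : ℕ} {a : ℕ → ℝ}

lemma lower_ne_upper_of_not_collinear (hcol : ¬Collinear ℝ (points n a)) {j : ℕ} (hj : j < n) :
    lower n a j ≠ upper n a j ∨ lower n a (j + 1) ≠ upper n a (j + 1) := by
  by_contra! h
  have hchord : chord (upper n a) j = chord (lower n a) j := by
    funext x
    simp only [chord, fwdDiff, h.1, h.2]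
  have hline : ∀ k ≤ n, a k = chord (lower n a) j k := fun k hk => le_antisymm
    (by simpa [vertex, hchord] using le_chord_upper hj (vertex_mem_hull (a := a) hk))
    (by simpa [vertex] using chord_lower_le hj (vertex_mem_hull (a := a) hk))
  refine hcol ((collinear_iff_of_mem (vertex_mem_points (a := a) (Nat.zero_le n))).2
    ⟨pt 1 (Δ_[1] (lower n a) j), ?_⟩)
  rintro _ ⟨k, hk, rfl⟩
  refine ⟨k, ?_⟩
  rw [vadd_eq_add, vertex, hline k hk, hline 0 (Nat.zero_le n)]
  ext i; fin_cases i <;> simp [pt, chord]; ring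

lemma polyCurve_lower_inter_upper_subset
    (hne : ∀ j < n, lower n a j ≠ upper n a j ∨ lower n a (j + 1) ≠ upper n a (j + 1)) :
    polyCurve (lower n a) n ∩ polyCurve (upper n a) n ⊆ vertex (lower n a) '' Iic n := by
  rintro _ ⟨hzl, hzu⟩
  obtain ⟨k, hk, x, ⟨hx₁, hx₂⟩, rfl⟩ := mem_polyCurve.1 hzl
  obtain ⟨k', hk', x', -, he⟩ := mem_polyCurve.1 hzu
  obtain rfl : x' = x := by simpa using congrArg (· 0) he
  have he' : chord (upper n a) k' x' = chord (lower n a) k x' := by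
    simpa using congrArg (· 1) he
  have hup : chord (upper n a) k x' ≤ chord (lower n a) k x' := he' ▸ le_chord_upper hk'
    (polyCurve_upper_subset_hull (mem_polyCurve.2 ⟨k, hk, x', ⟨hx₁, hx₂⟩, rfl⟩))
  have h₀ := lower_le_upper (n := n) (a := a) (i := k) hk.le
  have h₁ := lower_le_upper (n := n) (a := a) (i := k + 1) hk
  simp only [chord, fwdDiff] at hup
  rcases hx₁.eq_or_lt with rfl | hx₁
  · exact ⟨k, by simp; omega, by simp [vertex, chord]⟩
  rcases hx₂.eq_or_lt with rfl | hx₂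
  · exact ⟨k + 1, by simpa using hk, by simp [vertex, chord, fwdDiff]⟩
  rcases hne k hk with h | h
  · exact absurd (by nlinarith) h
  · exact absurd (by nlinarith) h

lemma polyDelta_eq_polyLength_add (hn : 1 ≤ n) (hcol : ¬Collinear ℝ (points n a)) :
    polyDelta a n = polyLength (lower n a) n + polyLength (upper n a) n := by
  have := Measure.nullSingletonClass_hausdorff ℝ² one_pos
  have hnull : μH[1] (polyCurve (lower n a) n ∩ polyCurve (upper n a) n) = 0 :=
    measure_mono_null (polyCurve_lower_inter_upper_subset
      fun _ hj => lower_ne_upper_of_not_collinear hcol hj) (((finite_Iic n).image _).measure_zero _)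
  rw [polyDelta, convexHull_polyCurve hn, frontier_hull hn,
    measure_union₀ (measurableSet_polyCurve _ _).nullMeasurableSet hnull,
    hausdorffMeasure_polyCurve, hausdorffMeasure_polyCurve,
    ENNReal.toReal_add ENNReal.ofReal_ne_top ENNReal.ofReal_ne_top,
    ENNReal.toReal_ofReal (polyLength_nonneg _ _), ENNReal.toReal_ofReal (polyLength_nonneg _ _)]

lemma two_mul_dist_vertex_le {i : ℕ} (hi : i < n) :
    2 * dist (vertex a i) (vertex a (i + 1)) ≤
      polyLength (lower n a) n + polyLength (upper n a) n := by
  set F := vertex (lower n a)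
  set G := vertex (upper n a)
  have h₀ : F 0 = G 0 := by simp [F, G, vertex, lower_zero, upper_zero]
  have hn : F n = G n := by simp [F, G, vertex, lower_last, upper_last]
  have hv : ∀ k ≤ n, vertex a k ∈ segment ℝ (F k) (G k) := fun k hk =>
    pt_mem_segment (lower_le hk) (le_upper hk)
  rw [polyLength_eq_sum_dist, polyLength_eq_sum_dist]
  suffices dist (vertex a i) (vertex a (i + 1)) ≤
      (∑ k ∈ Finset.range n, dist (F k) (F (k + 1)) +
        ∑ k ∈ Finset.range n, dist (G k) (G (k + 1))) / 2 by linarith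
  refine dist_le_of_mem_segment (hv i hi.le) (hv (i + 1) hi) fun p hp q hq => ?_
  rcases hp with rfl | rfl <;> rcases hq with rfl | rfl
  · linarith [two_mul_dist_same_chain_le F G h₀ hn i.le_succ hi]
  · linarith [two_mul_dist_cross_chain_le F G h₀ hn hi.le hi]
  · linarith [two_mul_dist_cross_chain_le F G h₀ hn hi hi.le, dist_comm (G i) (F (i + 1))]
  · linarith [two_mul_dist_same_chain_le G F h₀.symm hn.symm i.le_succ hi]

end Perimeter

end Inconstancy

open Inconstancy

theorem one_le_polyIncon_le_general (n : ℕ) (hn : 1 ≤ n) (a : ℕ → ℝ)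
    (hcol : ¬ Collinear ℝ {p : EuclideanSpace ℝ (Fin 2) | ∃ i ≤ n, p = pt i (a i)}) :
    1 ≤ polyIncon a n ∧ polyIncon a n ≤ n := by
  have hδ := polyDelta_eq_polyLength_add hn hcol
  have hedge : ∀ i < n, 2 * dist (vertex a i) (vertex a (i + 1)) ≤ polyDelta a n :=
    fun _ hi => hδ ▸ two_mul_dist_vertex_le hi
  have hpos : 0 < polyDelta a n := by
    refine lt_of_lt_of_le ?_ (hedge 0 hn)
    simp [vertex, dist_pt]
    positivity
  rw [polyIncon, le_div_iff₀ hpos, div_le_iff₀ hpos, one_mul]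
  constructor
  · linarith [polyLength_lower_le (n := n) (a := a), polyLength_upper_le (n := n) (a := a)]
  · calc 2 * polyLength a n = ∑ i ∈ Finset.range n, 2 * dist (vertex a i) (vertex a (i + 1)) := by
          rw [polyLength_eq_sum_dist, Finset.mul_sum]
      _ ≤ ∑ _i ∈ Finset.range n, polyDelta a n :=
          Finset.sum_le_sum fun i hi => hedge i (Finset.mem_range.1 hi)
      _ = n * polyDelta a n := by simp

/-- The inconstancy of the polygonal curve through `(0,0), (1,a₁), …, (n,a_n)` (points
not all collinear) lies between `1` and `n`. -/
theorem one_le_polyIncon_le (n : ℕ) (hn : 1 ≤ n) (a : ℕ → ℝ) (h0 : a 0 = 0)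
    (hcol : ¬ Collinear ℝ {p : EuclideanSpace ℝ (Fin 2) | ∃ i ≤ n, p = pt i (a i)}) :
    1 ≤ polyIncon a n ∧ polyIncon a n ≤ n :=
  one_le_polyIncon_le_general n hn a hcol
end
end

section
/- Let h > 0, N ≥ 2, and let u₀, u₁, …, u_N be real numbers each equal to 0 or h, with u₀ = 0, and such that h is attained. Let α ≥ 1 be the least index with u_α = h (the length of the longest initial string of 0's), and suppose u_N = 0; let β ≥ 1 be such that N − β is the greatest index with value h (the length of the longest final string of 0's). Let N₀₀, N_hh, N₀h, N_h0 be respectively the number of indices 0 ≤ i < N with (u_i, u_{i+1}) equal to (0,0), (h,h), (0,h), (h,0). Let Γ_N ⊆ ℝ² be the polygonal curve through (0,u₀), (1,u₁), …, (N,u_N), with length ℓ(Γ_N) = Σ_{i<N} √(1 + (u_{i+1} − u_i)²), and let δ(Γ_N) be the one-dimensional Hausdorff measure of the frontier of the convex hull of Γ_N. Then the inconstancy ℐ(Γ_N) := 2ℓ(Γ_N)/δ(Γ_N) equals 2(N₀₀ + N_hh + √(1 + h²)(N₀h + N_h0)) / (√(h² + α²) + N − α − β + √(h² + β²) + N). 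-/
/-!
Since `u` only takes the values `0` and `h`, every step of `Γ_N` has length `1` or `√(1 + h²)`,
which gives `ℓ(Γ_N)` in terms of the block counts. The convex hull of `Γ_N` is the trapezoid with
vertices `(0,0)`, `(α,h)`, `(N-β,h)`, `(N,0)`: these four points are vertices of `Γ_N`, and the
minimality of `α` and maximality of `N - β` put every vertex `(i, u_i)` inside the trapezoid. The
frontier of the trapezoid is the union of its four sides, any two of which meet in at most one
point, so `δ(Γ_N)` is the sum `N + (N - α - β) + √(α² + h²) + √(β² + h²)` of their lengths.
-/

noncomputable section
open MeasureTheory Real Set Filter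
open scoped ENNReal

/-- The number of indices `0 ≤ i < N` with `u_i = j` and `u_{i+1} = j'`. -/
def blockCount (u : ℕ → ℝ) (N : ℕ) (j j' : ℝ) : ℕ :=
  ((Finset.range N).filter fun i => u i = j ∧ u (i + 1) = j').card

open Topology

@[simp] lemma pt_apply_zero (x y : ℝ) : pt x y 0 = x := rfl
@[simp] lemma pt_apply_one (x y : ℝ) : pt x y 1 = y := rfl

lemma eq_pt_of_apply {p : EuclideanSpace ℝ (Fin 2)} {x y : ℝ} (hx : p 0 = x) (hy : p 1 = y) :
    p = pt x y := by
  ext i; fin_cases i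
  · exact hx
  · exact hy

lemma mem_segment_pt_iff {p : EuclideanSpace ℝ (Fin 2)} {x₁ y₁ x₂ y₂ : ℝ} :
    p ∈ segment ℝ (pt x₁ y₁) (pt x₂ y₂) ↔
      ∃ t ∈ Icc (0 : ℝ) 1, p 0 = x₁ + t * (x₂ - x₁) ∧ p 1 = y₁ + t * (y₂ - y₁) := by
  rw [segment_eq_image']
  refine exists_congr fun t => and_congr_right fun _ => ⟨?_, fun ⟨hx, hy⟩ => ?_⟩
  · rintro rfl
    simp [pt]
  · rw [eq_pt_of_apply hx hy]
    ext i; fin_cases i <;> simp [pt]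

lemma mem_segment_pt_of_apply_one_eq {p : EuclideanSpace ℝ (Fin 2)} {x₁ x₂ y : ℝ}
    (hy : p 1 = y) (hx : p 0 ∈ Icc x₁ x₂) : p ∈ segment ℝ (pt x₁ y) (pt x₂ y) := by
  rw [← segment_eq_Icc (𝕜 := ℝ) (hx.1.trans hx.2), segment_eq_image' (𝕜 := ℝ)] at hx
  obtain ⟨t, ht, hpt⟩ := hx
  exact mem_segment_pt_iff.2 ⟨t, ht, by simpa using hpt.symm, by simp [hy]⟩

lemma apply_one_eq_of_mem_segment {p : EuclideanSpace ℝ (Fin 2)} {x₁ x₂ c : ℝ}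
    (hp : p ∈ segment ℝ (pt x₁ c) (pt x₂ c)) : p 1 = c := by
  obtain ⟨t, -, -, hy⟩ := mem_segment_pt_iff.1 hp
  simpa using hy

lemma subsingleton_inter_segment_of_apply_one_eq {s : Set (EuclideanSpace ℝ (Fin 2))}
    {c x₁ y₁ x₂ y₂ : ℝ} (hs : ∀ p ∈ s, p 1 = c) (hy : y₁ ≠ y₂) :
    (s ∩ segment ℝ (pt x₁ y₁) (pt x₂ y₂)).Subsingleton := by
  rintro p ⟨hps, hp⟩ q ⟨hqs, hq⟩
  obtain ⟨t, -, hpx, hpy⟩ := mem_segment_pt_iff.1 hp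
  obtain ⟨r, -, hqx, hqy⟩ := mem_segment_pt_iff.1 hq
  have htr : t = r :=
    mul_right_cancel₀ (sub_ne_zero.2 hy.symm) (by linarith [hs p hps, hs q hqs])
  rw [eq_pt_of_apply hpx hpy, eq_pt_of_apply hqx hqy, htr]

lemma hausdorffMeasure_segment_pt (x₁ y₁ x₂ y₂ : ℝ) :
    μH[1] (segment ℝ (pt x₁ y₁) (pt x₂ y₂)) = ENNReal.ofReal √((x₁ - x₂) ^ 2 + (y₁ - y₂) ^ 2) := by
  rw [hausdorffMeasure_segment, edist_dist, EuclideanSpace.dist_eq]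
  simp [Fin.sum_univ_two, pt, Real.dist_eq, sq_abs]

lemma nullMeasurableSet_segment (x y : EuclideanSpace ℝ (Fin 2)) :
    NullMeasurableSet (segment ℝ x y) μH[1] := by
  rw [← convexHull_pair (𝕜 := ℝ)]
  exact ((Set.toFinite _).isCompact_convexHull ℝ).isClosed.measurableSet.nullMeasurableSet

theorem IsMaxOn.notMem_interior {E : Type*} [AddCommGroup E] [Module ℝ E] [TopologicalSpace E]
    [ContinuousAdd E] [ContinuousSMul ℝ E] {s : Set E} {f : E → ℝ} {p v : E}
    (hf : IsMaxOn f s p) (hv : ∀ t : ℝ, 0 < t → f p < f (p + t • v)) : p ∉ interior s := by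
  intro hp
  have hray : Tendsto (fun t : ℝ => p + t • v) (𝓝[>] 0) (𝓝 p) := by
    have : Continuous fun t : ℝ => p + t • v := by fun_prop
    simpa using (this.tendsto 0).mono_left nhdsWithin_le_nhds
  obtain ⟨t, hts, ht⟩ :=
    ((hray.eventually (mem_interior_iff_mem_nhds.1 hp)).and self_mem_nhdsWithin).exists
  exact (hv t ht).not_ge (hf hts)

/-- The trapezoid with vertices `(0,0)`, `(a,h)`, `(n-b,h)`, `(n,0)`. -/
def trapezoid (h a b n : ℝ) : Set (EuclideanSpace ℝ (Fin 2)) :=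
  {p | 0 ≤ p 1 ∧ p 1 ≤ h ∧ a * p 1 ≤ h * p 0 ∧ b * p 1 ≤ h * (n - p 0)}

section Trapezoid

variable {h a b n : ℝ}

@[simp] lemma pt_mem_trapezoid {x y : ℝ} :
    pt x y ∈ trapezoid h a b n ↔ 0 ≤ y ∧ y ≤ h ∧ a * y ≤ h * x ∧ b * y ≤ h * (n - x) :=
  Iff.rfl

lemma convex_trapezoid : Convex ℝ (trapezoid h a b n) := by
  intro p hp q hq s t hs ht hst
  obtain ⟨hp1, hp2, hp3, hp4⟩ := hp
  obtain ⟨hq1, hq2, hq3, hq4⟩ := hq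
  have hn : n = s * n + t * n := by rw [← add_mul, hst, one_mul]
  have hh : h = s * h + t * h := by rw [← add_mul, hst, one_mul]
  simp only [trapezoid, mem_ofPred_eq, PiLp.add_apply, PiLp.smul_apply, smul_eq_mul]
  refine ⟨by positivity, ?_, ?_, ?_⟩
  · rw [hh]; gcongr
  · linear_combination s * hp3 + t * hq3
  · rw [hn]
    linear_combination s * hp4 + t * hq4

lemma isClosed_trapezoid : IsClosed (trapezoid h a b n) := by
  simp only [trapezoid, ofPred_and]
  refine (isClosed_le ?_ ?_).inter
    ((isClosed_le ?_ ?_).inter ((isClosed_le ?_ ?_).inter (isClosed_le ?_ ?_))) <;> fun_prop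

lemma trapezoid_subset_of_convex (hh : 0 < h) {s : Set (EuclideanSpace ℝ (Fin 2))}
    (hs : Convex ℝ s) (h₀₀ : pt 0 0 ∈ s) (hn₀ : pt n 0 ∈ s) (hah : pt a h ∈ s)
    (hbh : pt (n - b) h ∈ s) : trapezoid h a b n ⊆ s := by
  rintro p ⟨h₁, h₂, h₃, h₄⟩
  set t := p 1 / h
  have ht : t ∈ Icc (0 : ℝ) 1 := ⟨by positivity, div_le_one_of_le₀ h₂ hh.le⟩
  have hpt : p 1 = t * h := (div_mul_cancel₀ _ hh.ne').symm
  -- `p` lies on the horizontal chord at height `p 1` joining the two slanted sides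
  have hleft : pt (t * a) (t * h) ∈ s :=
    hs.segment_subset h₀₀ hah (mem_segment_pt_iff.2 ⟨t, ht, by simp, by simp⟩)
  have hright : pt (n - t * b) (t * h) ∈ s :=
    hs.segment_subset hn₀ hbh (mem_segment_pt_iff.2 ⟨t, ht, by simp; ring, by simp⟩)
  refine hs.segment_subset hleft hright (mem_segment_pt_of_apply_one_eq hpt ⟨?_, ?_⟩)
  · rw [hpt] at h₃; nlinarith
  · rw [hpt] at h₄; nlinarith

lemma frontier_trapezoid (hh : 0 < h) :
    frontier (trapezoid h a b n) = {p ∈ trapezoid h a b n |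
      p 1 = 0 ∨ p 1 = h ∨ a * p 1 = h * p 0 ∨ b * p 1 = h * (n - p 0)} := by
  rw [isClosed_trapezoid.frontier_eq]
  ext p
  refine ⟨fun ⟨hp, hint⟩ => ⟨hp, ?_⟩, fun ⟨hp, hside⟩ => ⟨hp, ?_⟩⟩
  · by_contra! hne
    obtain ⟨h₁, h₂, h₃, h₄⟩ := hp
    have hopen : IsOpen {q : EuclideanSpace ℝ (Fin 2) |
        0 < q 1 ∧ q 1 < h ∧ a * q 1 < h * q 0 ∧ b * q 1 < h * (n - q 0)} := by
      simp only [ofPred_and]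
      refine (isOpen_lt ?_ ?_).inter
        ((isOpen_lt ?_ ?_).inter ((isOpen_lt ?_ ?_).inter (isOpen_lt ?_ ?_))) <;> fun_prop
    refine hint (interior_maximal ?_ hopen
      ⟨h₁.lt_of_ne' hne.1, h₂.lt_of_ne hne.2.1, h₃.lt_of_ne hne.2.2.1, h₄.lt_of_ne hne.2.2.2⟩)
    exact fun q ⟨q₁, q₂, q₃, q₄⟩ => ⟨q₁.le, q₂.le, q₃.le, q₄.le⟩
  -- on each side, the active constraint is maximal there and grows along an outward direction `v`
  · rcases hside with hp₁ | hp₁ | hp₁ | hp₁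
    · refine IsMaxOn.notMem_interior (f := fun q => -q 1) (v := pt 0 (-1))
        (isMaxOn_iff.2 fun q hq => by simp [hp₁, hq.1]) fun t ht => by simp [hp₁, ht]
    · refine IsMaxOn.notMem_interior (f := fun q => q 1) (v := pt 0 1)
        (isMaxOn_iff.2 fun q hq => by simp [hp₁, hq.2.1]) fun t ht => by simp [hp₁, ht]
    · refine IsMaxOn.notMem_interior (f := fun q => a * q 1 - h * q 0) (v := pt (-1) 0)
        (isMaxOn_iff.2 fun q hq => ?_) fun t ht => ?_
      · simp only [hp₁, sub_self, sub_nonpos, hq.2.2.1]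
      · simp only [PiLp.add_apply, PiLp.smul_apply, pt_apply_zero, pt_apply_one, smul_eq_mul]
        nlinarith
    · refine IsMaxOn.notMem_interior (f := fun q => b * q 1 + h * q 0) (v := pt 1 0)
        (isMaxOn_iff.2 fun q hq => ?_) fun t ht => ?_
      · dsimp only
        linarith [hq.2.2.2]
      · simp only [PiLp.add_apply, PiLp.smul_apply, pt_apply_zero, pt_apply_one, smul_eq_mul]
        nlinarith

lemma frontier_trapezoid_eq_union_segment (hh : 0 < h) (ha : 0 ≤ a) (hb : 0 ≤ b)
    (hab : a + b ≤ n) :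
    frontier (trapezoid h a b n) =
      segment ℝ (pt 0 0) (pt n 0) ∪ segment ℝ (pt a h) (pt (n - b) h) ∪
        (segment ℝ (pt 0 0) (pt a h) ∪ segment ℝ (pt n 0) (pt (n - b) h)) := by
  rw [frontier_trapezoid hh]
  ext p
  constructor
  · rintro ⟨⟨h₁, h₂, h₃, h₄⟩, hside⟩
    have hslant : ∀ x y : ℝ, p 0 = x + p 1 / h * (y - x) → p ∈ segment ℝ (pt x 0) (pt y h) :=
      fun x y hx => mem_segment_pt_iff.2
        ⟨p 1 / h, ⟨by positivity, div_le_one_of_le₀ h₂ hh.le⟩, hx, by field_simp; ring⟩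
    rcases hside with hp₁ | hp₁ | hp₁ | hp₁
    · rw [hp₁] at h₃ h₄
      exact .inl <| .inl <| mem_segment_pt_of_apply_one_eq hp₁ ⟨by nlinarith, by nlinarith⟩
    · rw [hp₁] at h₃ h₄
      exact .inl <| .inr <| mem_segment_pt_of_apply_one_eq hp₁ ⟨by nlinarith, by nlinarith⟩
    · exact .inr <| .inl <| hslant 0 a (by field_simp; linarith)
    · exact .inr <| .inr <| hslant n (n - b) (by field_simp; linarith)
  · have hv : pt 0 0 ∈ trapezoid h a b n ∧ pt n 0 ∈ trapezoid h a b n ∧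
        pt a h ∈ trapezoid h a b n ∧ pt (n - b) h ∈ trapezoid h a b n := by
      simp only [pt_mem_trapezoid]
      refine ⟨⟨?_, ?_, ?_, ?_⟩, ⟨?_, ?_, ?_, ?_⟩, ⟨?_, ?_, ?_, ?_⟩, ⟨?_, ?_, ?_, ?_⟩⟩ <;> nlinarith
    obtain ⟨h₀₀, hn₀, hah, hbh⟩ := hv
    rintro ((hp | hp) | (hp | hp)) <;> obtain ⟨t, -, hx, hy⟩ := mem_segment_pt_iff.1 hp
    · exact ⟨convex_trapezoid.segment_subset h₀₀ hn₀ hp, .inl (by simpa using hy)⟩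
    · exact ⟨convex_trapezoid.segment_subset hah hbh hp, .inr <| .inl (by simpa using hy)⟩
    · exact ⟨convex_trapezoid.segment_subset h₀₀ hah hp, .inr <| .inr <| .inl
        (by rw [hx, hy]; ring)⟩
    · exact ⟨convex_trapezoid.segment_subset hn₀ hbh hp, .inr <| .inr <| .inr
        (by rw [hx, hy]; ring)⟩

lemma subsingleton_inter_slanted_sides (hh : 0 < h) (hn : 0 < n) :
    (segment ℝ (pt 0 0) (pt a h) ∩ segment ℝ (pt n 0) (pt (n - b) h)).Subsingleton := by
  have hapex : ∀ p ∈ segment ℝ (pt 0 0) (pt a h) ∩ segment ℝ (pt n 0) (pt (n - b) h),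
      ∃ t, t * (a + b) = n ∧ p = pt (t * a) (t * h) := by
    rintro p ⟨hl, hr⟩
    obtain ⟨t, -, hlx, hly⟩ := mem_segment_pt_iff.1 hl
    obtain ⟨s, -, hrx, hry⟩ := mem_segment_pt_iff.1 hr
    have hts : t = s := mul_right_cancel₀ hh.ne' (by linarith)
    subst hts
    exact ⟨t, by linarith, eq_pt_of_apply (by linarith) (by linarith)⟩
  rintro p hp q hq
  obtain ⟨t, ht, rfl⟩ := hapex p hp
  obtain ⟨r, hr, rfl⟩ := hapex q hq
  have hab : a + b ≠ 0 := by rintro hab; rw [hab, mul_zero] at ht; exact hn.ne ht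
  rw [mul_right_cancel₀ hab (ht.trans hr.symm)]

lemma hausdorffMeasure_frontier_trapezoid_eq_add (hh : 0 < h) (ha : 0 ≤ a) (hb : 0 ≤ b)
    (hab : a + b ≤ n) (hn : 0 < n) :
    μH[1] (frontier (trapezoid h a b n)) =
      μH[1] (segment ℝ (pt 0 0) (pt n 0)) + μH[1] (segment ℝ (pt a h) (pt (n - b) h)) +
        (μH[1] (segment ℝ (pt 0 0) (pt a h)) + μH[1] (segment ℝ (pt n 0) (pt (n - b) h))) := by
  have := Measure.nullSingletonClass_hausdorff (EuclideanSpace ℝ (Fin 2)) one_pos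
  rw [frontier_trapezoid_eq_union_segment hh ha hb hab]
  set Sb := segment ℝ (pt 0 0) (pt n 0)
  set St := segment ℝ (pt a h) (pt (n - b) h)
  have hSb : ∀ p ∈ Sb, p 1 = 0 := fun p => apply_one_eq_of_mem_segment
  have hSt : ∀ p ∈ St, p 1 = h := fun p => apply_one_eq_of_mem_segment
  have hbt : Disjoint Sb St :=
    disjoint_left.2 fun p hpb hpt => hh.ne (by rw [← hSt p hpt, hSb p hpb])
  have hcorners : μH[1] ((Sb ∪ St) ∩
      (segment ℝ (pt 0 0) (pt a h) ∪ segment ℝ (pt n 0) (pt (n - b) h))) = 0 := by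
    simp only [union_inter_distrib_right, inter_union_distrib_left, measure_union_null_iff]
    refine ⟨⟨?_, ?_⟩, ?_, ?_⟩ <;> refine Set.Subsingleton.measure_zero ?_ _ <;>
      first
      | exact subsingleton_inter_segment_of_apply_one_eq hSb hh.ne
      | exact subsingleton_inter_segment_of_apply_one_eq hSt hh.ne
  rw [measure_union₀ ((nullMeasurableSet_segment _ _).union (nullMeasurableSet_segment _ _))
      hcorners, measure_union₀ (nullMeasurableSet_segment _ _) hbt.aedisjoint,
    measure_union₀ (nullMeasurableSet_segment _ _)
      ((subsingleton_inter_slanted_sides hh hn).measure_zero _)]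

lemma hausdorffMeasure_frontier_trapezoid (hh : 0 < h) (ha : 0 ≤ a) (hb : 0 ≤ b)
    (hab : a + b ≤ n) (hn : 0 < n) :
    (μH[1] (frontier (trapezoid h a b n))).toReal =
      n + (n - a - b) + √(a ^ 2 + h ^ 2) + √(b ^ 2 + h ^ 2) := by
  have hnab : 0 ≤ n - a - b := by linarith
  have hbottom : √((0 - n) ^ 2 + (0 - 0) ^ 2) = n := by
    rw [show (0 - n) ^ 2 + (0 - 0) ^ 2 = n ^ 2 by ring, sqrt_sq hn.le]
  have htop : √((a - (n - b)) ^ 2 + (h - h) ^ 2) = n - a - b := by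
    rw [show (a - (n - b)) ^ 2 + (h - h) ^ 2 = (n - a - b) ^ 2 by ring, sqrt_sq hnab]
  have hleft : √((0 - a) ^ 2 + (0 - h) ^ 2) = √(a ^ 2 + h ^ 2) := by ring_nf
  have hright : √((n - (n - b)) ^ 2 + (0 - h) ^ 2) = √(b ^ 2 + h ^ 2) := by ring_nf
  rw [hausdorffMeasure_frontier_trapezoid_eq_add hh ha hb hab hn]
  simp only [hausdorffMeasure_segment_pt, hbottom, htop, hleft, hright]
  rw [ENNReal.toReal_add (by finiteness) (by finiteness),
    ENNReal.toReal_add (by finiteness) (by finiteness),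
    ENNReal.toReal_add (by finiteness) (by finiteness), ENNReal.toReal_ofReal hn.le,
    ENNReal.toReal_ofReal hnab, ENNReal.toReal_ofReal (sqrt_nonneg _),
    ENNReal.toReal_ofReal (sqrt_nonneg _)]
  ring

end Trapezoid

section PolyCurve

variable {u : ℕ → ℝ} {N : ℕ}

lemma pt_mem_polyCurve (hN : 0 < N) {i : ℕ} (hi : i ≤ N) : pt i (u i) ∈ polyCurve u N := by
  rcases hi.lt_or_eq with hi | rfl
  · exact mem_biUnion (Finset.mem_range.2 hi) (left_mem_segment ℝ _ _)
  · obtain ⟨k, rfl⟩ : ∃ k, i = k + 1 := ⟨i - 1, by omega⟩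
    refine mem_biUnion (Finset.mem_range.2 (Nat.lt_succ_self k)) ?_
    simpa using right_mem_segment ℝ (pt k (u k)) (pt (k + 1) (u (k + 1)))

lemma polyCurve_subset {s : Set (EuclideanSpace ℝ (Fin 2))} (hs : Convex ℝ s)
    (hu : ∀ i ≤ N, pt i (u i) ∈ s) : polyCurve u N ⊆ s :=
  iUnion₂_subset fun i hi => by
    have hi := Finset.mem_range.1 hi
    simpa using hs.segment_subset (hu i hi.le) (hu (i + 1) hi)

end PolyCurve

section BinarySequence

variable {h : ℝ} {u : ℕ → ℝ} {N α β : ℕ}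

lemma le_and_le_sub_of_eq_height (hh : h ≠ 0) (hαmin : ∀ i < α, u i = 0)
    (hβmax : ∀ i, N - β < i → i ≤ N → u i = 0) {i : ℕ} (hi : i ≤ N) (hui : u i = h) :
    α ≤ i ∧ i ≤ N - β := by
  refine ⟨not_lt.1 fun hiα => hh ?_, not_lt.1 fun hiβ => hh ?_⟩
  · rw [← hui, hαmin i hiα]
  · rw [← hui, hβmax i hiβ hi]

lemma convexHull_polyCurve_eq_trapezoid (hh : 0 < h) (hN : 0 < N)
    (hvals : ∀ i ≤ N, u i = 0 ∨ u i = h) (hu0 : u 0 = 0) (huN : u N = 0)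
    (hαN : α ≤ N) (hαh : u α = h) (hαmin : ∀ i < α, u i = 0) (hβN : β ≤ N)
    (hβh : u (N - β) = h) (hβmax : ∀ i, N - β < i → i ≤ N → u i = 0) :
    convexHull ℝ (polyCurve u N) = trapezoid h α β N := by
  have hvertex : ∀ i ≤ N, pt i (u i) ∈ trapezoid h α β N := by
    intro i hi
    have hi' : (i : ℝ) ≤ N := by exact_mod_cast hi
    rcases hvals i hi with hui | hui <;> rw [hui, pt_mem_trapezoid]
    · refine ⟨le_rfl, hh.le, ?_, ?_⟩ <;> nlinarith
    · obtain ⟨hαi, hiβ⟩ := le_and_le_sub_of_eq_height hh.ne' hαmin hβmax hi hui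
      have hαi : (α : ℝ) ≤ i := by exact_mod_cast hαi
      have hiβ : (i : ℝ) ≤ N - β := by rw [← Nat.cast_sub hβN]; exact_mod_cast hiβ
      refine ⟨hh.le, le_rfl, ?_, ?_⟩ <;> nlinarith
  have hcurve : ∀ {i x y}, i ≤ N → u i = y → (i : ℝ) = x →
      pt x y ∈ convexHull ℝ (polyCurve u N) := by
    rintro i x y hi rfl rfl
    exact subset_convexHull ℝ _ (pt_mem_polyCurve hN hi)
  refine (convexHull_min (polyCurve_subset convex_trapezoid hvertex) convex_trapezoid).antisymm
    (trapezoid_subset_of_convex hh (convex_convexHull ℝ _) ?_ ?_ ?_ ?_)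
  · exact hcurve (Nat.zero_le N) hu0 Nat.cast_zero
  · exact hcurve le_rfl huN rfl
  · exact hcurve hαN hαh rfl
  · exact hcurve (Nat.sub_le N β) hβh (Nat.cast_sub hβN)

lemma polyLength_eq_of_binary (hh : h ≠ 0) (hvals : ∀ i ≤ N, u i = 0 ∨ u i = h) :
    polyLength u N = blockCount u N 0 0 + blockCount u N h h
      + √(1 + h ^ 2) * (blockCount u N 0 h + blockCount u N h 0) := by
  have hcount : ∀ j j', (blockCount u N j j' : ℝ) =
      ∑ i ∈ Finset.range N, if u i = j ∧ u (i + 1) = j' then 1 else 0 := by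
    simp [blockCount, Finset.sum_boole]
  simp only [polyLength, hcount, Finset.mul_sum, ← Finset.sum_add_distrib]
  refine Finset.sum_congr rfl fun i hi => ?_
  have hi := Finset.mem_range.1 hi
  rcases hvals i hi.le with hi₀ | hi₀ <;> rcases hvals (i + 1) hi with hi₁ | hi₁ <;>
    simp [hi₀, hi₁, hh, hh.symm]

end BinarySequence

theorem polyIncon_binary_finite_beta_pos_general
    (h : ℝ) (hh : 0 < h) (N : ℕ) (hN : 2 ≤ N) (u : ℕ → ℝ)
    (hvals : ∀ i ≤ N, u i = 0 ∨ u i = h) (hu0 : u 0 = 0) (huN : u N = 0)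
    (α : ℕ) (hαN : α ≤ N) (hαh : u α = h) (hαmin : ∀ i < α, u i = 0)
    (β : ℕ) (hβN : β ≤ N) (hβh : u (N - β) = h)
    (hβmax : ∀ i, N - β < i → i ≤ N → u i = 0) :
    polyIncon u N =
      2 * ((blockCount u N 0 0 : ℝ) + (blockCount u N h h : ℝ)
            + Real.sqrt (1 + h ^ 2) * ((blockCount u N 0 h : ℝ) + (blockCount u N h 0 : ℝ)))
        / (Real.sqrt (h ^ 2 + (α : ℝ) ^ 2) + (N : ℝ) - (α : ℝ) - (β : ℝ)
            + Real.sqrt (h ^ 2 + (β : ℝ) ^ 2) + (N : ℝ)) := by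
  have hαβ : α + β ≤ N := by
    have := (le_and_le_sub_of_eq_height hh.ne' hαmin hβmax hαN hαh).2
    omega
  rw [polyIncon, polyDelta, polyLength_eq_of_binary hh.ne' hvals,
    convexHull_polyCurve_eq_trapezoid hh (by omega) hvals hu0 huN hαN hαh hαmin hβN hβh hβmax,
    hausdorffMeasure_frontier_trapezoid hh (Nat.cast_nonneg α) (Nat.cast_nonneg β)
      (by exact_mod_cast hαβ) (Nat.cast_pos.2 (by omega)),
    add_comm ((α : ℝ) ^ 2), add_comm ((β : ℝ) ^ 2)]
  ring

/-- Inconstancy of a finite `{0,h}`-valued sequence `u₀,…,u_N` with `u₀ = 0 = u_N`, in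
terms of the counts of length-2 blocks, the length `α` of the longest initial string of
`0`'s and the length `β` of the longest final string of `0`'s. -/
theorem polyIncon_binary_finite_beta_pos
    (h : ℝ) (hh : 0 < h) (N : ℕ) (hN : 2 ≤ N) (u : ℕ → ℝ)
    (hvals : ∀ i ≤ N, u i = 0 ∨ u i = h) (hu0 : u 0 = 0) (huN : u N = 0)
    (α : ℕ) (hα1 : 1 ≤ α) (hαN : α ≤ N) (hαh : u α = h) (hαmin : ∀ i < α, u i = 0)
    (β : ℕ) (hβ1 : 1 ≤ β) (hβN : β ≤ N) (hβh : u (N - β) = h)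
    (hβmax : ∀ i, N - β < i → i ≤ N → u i = 0) :
    polyIncon u N =
      2 * ((blockCount u N 0 0 : ℝ) + (blockCount u N h h : ℝ)
            + Real.sqrt (1 + h ^ 2) * ((blockCount u N 0 h : ℝ) + (blockCount u N h 0 : ℝ)))
        / (Real.sqrt (h ^ 2 + (α : ℝ) ^ 2) + (N : ℝ) - (α : ℝ) - (β : ℝ)
            + Real.sqrt (h ^ 2 + (β : ℝ) ^ 2) + (N : ℝ)) :=
  polyIncon_binary_finite_beta_pos_general h hh N hN u hvals hu0 huN α hαN hαh hαmin β hβN hβh hβmax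
end
end
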